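/- arXiv:1102.1645 — 3 statements merged into one kernel-verified Lean document; each statement's English description precedes it below -/
import Mathlib

section
/- Let Ω be the category whose objects are the finite sets ⟨s⟩ = {1,…,s} for s > 0 and whose morphisms are surjective functions. For a fixed pointed set S with a chosen linear order on S∖{*}, and a fixed commutative ring R, define the functor M : Ωᵒᵖ → Mod R by M(⟨s⟩) = the free R-module on the s-fold smash power S^∧s (reduced: basis the non-basepoint elements), with a surjection h : ⟨t⟩ → ⟨s⟩ acting by (x₁,…,x_s) ↦ (x_{h(1)},…,x_{h(t)}) extended linearly. Then M is a projective object of the abelian category of functors Ωᵒᵖ → Mod R. -/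
structure OmegaFunctor (R : Type) [CommRing R] where
  obj : ℕ → Type
  [acg : ∀ s, AddCommGroup (obj s)]
  [mod : ∀ s, Module R (obj s)]
  map : ∀ {s t : ℕ} (h : Fin (t + 1) → Fin (s + 1)),
    Function.Surjective h → (obj s →ₗ[R] obj t)
  map_id : ∀ s : ℕ, map (s := s) id Function.surjective_id = LinearMap.id
  map_comp : ∀ {s t u : ℕ} (h : Fin (t + 1) → Fin (s + 1)) (hh : Function.Surjective h)
    (k : Fin (u + 1) → Fin (t + 1)) (hk : Function.Surjective k),
    map (h ∘ k) (hh.comp hk) = (map k hk).comp (map h hh)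

attribute [instance] OmegaFunctor.acg OmegaFunctor.mod

/-- Natural transformations F → G, as a submodule of the product of the Hom modules. -/
def OmegaFunctor.Nat {R : Type} [CommRing R] (F G : OmegaFunctor R) :
    Submodule R (∀ s : ℕ, F.obj s →ₗ[R] G.obj s) where
  carrier := {T | ∀ {s t : ℕ} (h : Fin (t + 1) → Fin (s + 1)) (hs : Function.Surjective h),
    (G.map h hs).comp (T s) = (T t).comp (F.map h hs)}
  add_mem' := by
    intro a b ha hb s t h hs
    simp only [Pi.add_apply, LinearMap.comp_add, LinearMap.add_comp, ha h hs, hb h hs]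
  zero_mem' := by
    intro s t h hs
    simp
  smul_mem' := by
    intro c a ha s t h hs
    simp only [Pi.smul_apply, LinearMap.comp_smul, LinearMap.smul_comp, ha h hs]

noncomputable def Mfun (R : Type) [CommRing R] (S : Type) (pt : S) : OmegaFunctor R where
  obj s := (Fin (s + 1) → {x : S // x ≠ pt}) →₀ R
  map h _ := Finsupp.lmapDomain R R (fun x => x ∘ h)
  map_id s := by
    exact Finsupp.lmapDomain_id R R
  map_comp h hh k hk := by
    exact Finsupp.lmapDomain_comp R R (fun x => x ∘ h) (fun x => x ∘ k)

/-! Every tuple `x : ⟨t⟩ → S ∖ {*}` factors as `x = e_I ∘ q_x`, where `e_I` is a fixed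
enumeration of its image `I` and `q_x` is a surjection with `q_{x ∘ h} = q_x ∘ h`. So a natural
family of elements indexed by tuples is freely determined by its values at the enumerations
`e_I`, i.e. `M` is free on a coproduct of representables: to lift `U` along the epimorphism `T`,
lift each value `U(e_I)` arbitrarily and transport the lifts along the `q_x`. -/

open Finset Function

namespace RangeFactorization

variable {A : Type*} [DecidableEq A]

-- `#I - 1 + 1` rather than `#I`, so that the domain is an object `Fin (s + 1)` of Ω.
noncomputable def enum (I : Finset A) (hI : I.Nonempty) : Fin (#I - 1 + 1) ≃ I :=
  (I.equivFinOfCardEq (Nat.succ_pred_eq_of_pos hI.card_pos).symm).symm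

lemma nonempty_of_image_eq {t : ℕ} {I : Finset A} {x : Fin (t + 1) → A}
    (hx : univ.image x = I) : I.Nonempty :=
  hx ▸ univ_nonempty.image x

noncomputable def factor {t : ℕ} {I : Finset A} (x : Fin (t + 1) → A) (hx : univ.image x = I) :
    Fin (t + 1) → Fin (#I - 1 + 1) :=
  fun i => (enum I (nonempty_of_image_eq hx)).symm ⟨x i, hx ▸ mem_image_of_mem x (mem_univ i)⟩

lemma enum_factor {t : ℕ} {I : Finset A} (x : Fin (t + 1) → A) (hx : univ.image x = I)
    (i : Fin (t + 1)) : (enum I (nonempty_of_image_eq hx) (factor x hx i) : A) = x i := by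
  simp [factor]

lemma factor_surjective {t : ℕ} {I : Finset A} (x : Fin (t + 1) → A) (hx : univ.image x = I) :
    Surjective (factor x hx) := by
  intro k
  subst hx
  obtain ⟨i, -, hi⟩ := mem_image.mp (enum _ (nonempty_of_image_eq rfl) k).2
  exact ⟨i, (enum _ _).symm_apply_eq.mpr (Subtype.ext hi)⟩

end RangeFactorization

namespace OmegaFunctor

open RangeFactorization

variable {R : Type} [CommRing R] {A : Type*}

def IsNaturalFamily (F : OmegaFunctor R) (f : ∀ t, (Fin (t + 1) → A) → F.obj t) : Prop :=
  ∀ ⦃s t : ℕ⦄ (h : Fin (t + 1) → Fin (s + 1)) (hh : Surjective h) (x : Fin (s + 1) → A),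
    f t (x ∘ h) = F.map h hh (f s x)

section Extension

variable [DecidableEq A] (F : OmegaFunctor R) (p : ∀ r, (Fin (r + 1) → A) → F.obj r)

noncomputable def extendAlong {t : ℕ} {I : Finset A} (x : Fin (t + 1) → A)
    (hx : univ.image x = I) : F.obj t :=
  F.map (factor x hx) (factor_surjective x hx)
    (p _ (Subtype.val ∘ enum I (nonempty_of_image_eq hx)))

noncomputable def extendAlongRange (t : ℕ) (x : Fin (t + 1) → A) : F.obj t :=
  extendAlong F p x rfl

lemma extendAlongRange_eq_extendAlong {t : ℕ} {I : Finset A} (x : Fin (t + 1) → A)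
    (hx : univ.image x = I) : extendAlongRange F p t x = extendAlong F p x hx := by
  subst hx
  rfl

lemma isNaturalFamily_extendAlongRange : F.IsNaturalFamily (extendAlongRange F p) := by
  intro s t h hh x
  have hrange : univ.image (x ∘ h) = univ.image x := by
    rw [← image_image, image_univ_of_surjective hh]
  rw [extendAlongRange_eq_extendAlong F p _ hrange]
  exact LinearMap.congr_fun (F.map_comp _ (factor_surjective x rfl) h hh) _

lemma extendAlongRange_of_isNaturalFamily (hp : F.IsNaturalFamily p) :
    extendAlongRange F p = p := by
  funext t x
  rw [extendAlongRange, extendAlong, ← hp]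
  congr 1
  funext i
  exact enum_factor x rfl i

lemma map_extendAlongRange {G : OmegaFunctor R} (T : F.Nat G) (t : ℕ) (x : Fin (t + 1) → A) :
    T.1 t (extendAlongRange F p t x) = extendAlongRange G (fun r y => T.1 r (p r y)) t x :=
  (LinearMap.congr_fun (T.2 _ _) _).symm

end Extension

theorem exists_lift_isNaturalFamily {F G : OmegaFunctor R} (T : F.Nat G)
    (hT : ∀ s, Surjective (T.1 s)) {g : ∀ t, (Fin (t + 1) → A) → G.obj t}
    (hg : G.IsNaturalFamily g) :
    ∃ f : ∀ t, (Fin (t + 1) → A) → F.obj t,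
      F.IsNaturalFamily f ∧ ∀ t x, T.1 t (f t x) = g t x := by
  classical
  choose p hp using fun r y => hT r (g r y)
  refine ⟨extendAlongRange F p, isNaturalFamily_extendAlongRange F p, fun t x => ?_⟩
  rw [map_extendAlongRange F p T, show (fun r y => T.1 r (p r y)) = g from funext₂ hp,
    extendAlongRange_of_isNaturalFamily G g hg]

end OmegaFunctor

namespace Mfun

variable {R : Type} [CommRing R] {S : Type} {pt : S}

lemma linearCombination_mem_nat {F : OmegaFunctor R}
    {f : ∀ t, (Fin (t + 1) → {x : S // x ≠ pt}) → F.obj t} (hf : F.IsNaturalFamily f) :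
    (fun t => Finsupp.linearCombination R (f t)) ∈ (Mfun R S pt).Nat F :=
  fun h hh => (Finsupp.lmapDomain_linearCombination R _ _ fun x => (hf h hh x).symm).symm

lemma isNaturalFamily_apply_single {G : OmegaFunctor R} (U : (Mfun R S pt).Nat G) :
    G.IsNaturalFamily fun t x => U.1 t (Finsupp.single x 1) := by
  intro s t h hh x
  have hU := LinearMap.congr_fun (U.2 h hh) (Finsupp.single x 1)
  change G.map h hh (U.1 s _) = U.1 t (Finsupp.mapDomain (· ∘ h) (Finsupp.single x 1)) at hU
  rw [Finsupp.mapDomain_single] at hU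
  exact hU.symm

end Mfun

theorem M_projective_general (R : Type) [CommRing R] (S : Type) (pt : S)
    (F G : OmegaFunctor R) (T : (F.Nat G)) (hT : ∀ s, Function.Surjective (T.1 s))
    (U : ((Mfun R S pt).Nat G)) :
    ∃ V : ((Mfun R S pt).Nat F), ∀ s, (T.1 s).comp (V.1 s) = U.1 s := by
  obtain ⟨f, hf, hTf⟩ :=
    OmegaFunctor.exists_lift_isNaturalFamily T hT (Mfun.isNaturalFamily_apply_single U)
  refine ⟨⟨_, Mfun.linearCombination_mem_nat hf⟩, fun s => ?_⟩
  refine Finsupp.lhom_ext' fun x => LinearMap.ext_ring ?_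
  show T.1 s (Finsupp.linearCombination R (f s) (Finsupp.single x 1)) = U.1 s (Finsupp.single x 1)
  rw [Finsupp.linearCombination_single, one_smul, hTf]

/-- Lemma 0.1 of the paper.  For a pointed set `S` with a chosen
linear order on `S ∖ {*}`, the functor `M(S) : Ωᵒᵖ → Mod R` is projective:
`Hom(M(S), −)` sends epimorphisms of functors (pointwise surjections) to
surjections. -/
theorem M_projective (R : Type) [CommRing R] (S : Type) (pt : S)
    [LinearOrder {x : S // x ≠ pt}]
    (F G : OmegaFunctor R) (T : (F.Nat G)) (hT : ∀ s, Function.Surjective (T.1 s))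
    (U : ((Mfun R S pt).Nat G)) :
    ∃ V : ((Mfun R S pt).Nat F), ∀ s, (T.1 s).comp (V.1 s) = U.1 s :=
  M_projective_general R S pt F G T hT U
end

section
/- With M as above (M(⟨s⟩) the free reduced R-module on S^∧s for a pointed set S with linearly ordered S∖{*}), let I be the set of strictly increasing tuples i = (x₁ < ⋯ < x_s) of elements of S∖{*}, and for such an i let e_i ∈ M(⟨s⟩) be the basis element [x₁∧⋯∧x_s]. Then for every functor F : Ωᵒᵖ → Mod R and every family of elements a_i ∈ F(⟨|i|⟩) indexed by i ∈ I, there exists a unique natural transformation T : M → F with T_{⟨|i|⟩}(e_i) = a_i for all i ∈ I. -/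
/-- The index set `I`: strictly increasing tuples `i = (x₁ < ⋯ < x_s)` of
non-basepoint elements of `S` (a tuple of length `s+1` for each `s : ℕ`). -/
def Idx (S : Type) (pt : S) [LinearOrder {x : S // x ≠ pt}] : Type :=
  Σ s : ℕ, {x : Fin (s + 1) → {a : S // a ≠ pt} // StrictMono x}

/-!
Every tuple `x : ⟨t⟩ → A` in a linearly ordered set factors uniquely as `ι ∘ h` with `ι`
strictly increasing and `h` surjective: `ι` lists the image of `x` in increasing order and
`h j` is the rank of `x j` in that image. Since `e_x = M(h) e_ι`, a natural transformation
`T` is forced to send `e_x` to `F(h) a_ι`; conversely this formula is natural because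
`(ι ∘ h) ∘ k = ι ∘ (h ∘ k)` is again such a factorization, so uniqueness of the
factorization does the rest.
-/

open Finset

namespace Tuple

abbrev Sorted (α : Type*) [Preorder α] : Type _ :=
  Σ s : ℕ, {ι : Fin (s + 1) → α // StrictMono ι}

variable {α : Type*} [LinearOrder α] {t : ℕ} (x : Fin (t + 1) → α)

noncomputable def sortedImageLen : ℕ := #(univ.image x) - 1

theorem card_image_eq_sortedImageLen_add_one : #(univ.image x) = sortedImageLen x + 1 := by
  have : 0 < #(univ.image x) := card_pos.2 ⟨x 0, mem_image_of_mem x (mem_univ 0)⟩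
  unfold sortedImageLen
  omega

noncomputable def sortedImage : Fin (sortedImageLen x + 1) → α :=
  (univ.image x).orderEmbOfFin (card_image_eq_sortedImageLen_add_one x)

theorem sortedImage_strictMono : StrictMono (sortedImage x) :=
  OrderEmbedding.strictMono _

noncomputable def rank (j : Fin (t + 1)) : Fin (sortedImageLen x + 1) :=
  ((univ.image x).orderIsoOfFin (card_image_eq_sortedImageLen_add_one x)).symm
    ⟨x j, mem_image_of_mem x (mem_univ j)⟩

theorem sortedImage_rank (j : Fin (t + 1)) : sortedImage x (rank x j) = x j := by
  rw [sortedImage, ← coe_orderIsoOfFin_apply, rank, OrderIso.apply_symm_apply]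

theorem sortedImage_comp_rank : sortedImage x ∘ rank x = x :=
  funext (sortedImage_rank x)

theorem rank_surjective : Function.Surjective (rank x) := by
  intro k
  obtain ⟨j, -, hj⟩ := mem_image.1 (orderEmbOfFin_mem (univ.image x) _ k)
  exact ⟨j, (sortedImage_strictMono x).injective ((sortedImage_rank x j).trans hj)⟩

variable {x}

theorem sortedImageLen_eq_of_comp_eq {s : ℕ} {ι : Fin (s + 1) → α} (hι : StrictMono ι)
    {h : Fin (t + 1) → Fin (s + 1)} (hh : Function.Surjective h) (hx : ι ∘ h = x) :
    sortedImageLen x = s := by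
  have himage : univ.image x = univ.image ι := by
    rw [← hx, ← image_image, image_univ_of_surjective hh]
  have := card_image_eq_sortedImageLen_add_one x
  rw [himage, card_image_of_injective _ hι.injective, card_univ, Fintype.card_fin] at this
  omega

theorem eq_sortedImage_of_comp_eq {ι : Fin (sortedImageLen x + 1) → α} (hι : StrictMono ι)
    {h : Fin (t + 1) → Fin (sortedImageLen x + 1)} (hh : Function.Surjective h)
    (hx : ι ∘ h = x) : ι = sortedImage x := by
  refine orderEmbOfFin_unique _ (fun k => ?_) hι
  obtain ⟨j, rfl⟩ := hh k
  exact hx ▸ mem_image_of_mem _ (mem_univ j)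

theorem eq_rank_of_comp_eq {h : Fin (t + 1) → Fin (sortedImageLen x + 1)}
    (hx : sortedImage x ∘ h = x) : h = rank x :=
  (sortedImage_strictMono x).injective.comp_left (hx.trans (sortedImage_comp_rank x).symm)

end Tuple

namespace OmegaFunctor

open Tuple

variable {R : Type} [CommRing R] (F : OmegaFunctor R) {α : Type*} [LinearOrder α]
  (a : ∀ i : Sorted α, F.obj i.1)

noncomputable def extendSorted {t : ℕ} (x : Fin (t + 1) → α) : F.obj t :=
  F.map (rank x) (rank_surjective x) (a ⟨_, sortedImage x, sortedImage_strictMono x⟩)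

theorem extendSorted_eq_of_comp_eq {s t : ℕ} {x : Fin (t + 1) → α} {ι : Fin (s + 1) → α}
    (hι : StrictMono ι) {h : Fin (t + 1) → Fin (s + 1)} (hh : Function.Surjective h)
    (hx : ι ∘ h = x) : F.extendSorted a x = F.map h hh (a ⟨s, ι, hι⟩) := by
  obtain rfl := sortedImageLen_eq_of_comp_eq hι hh hx
  obtain rfl := eq_sortedImage_of_comp_eq hι hh hx
  obtain rfl := eq_rank_of_comp_eq hx
  rfl

theorem extendSorted_of_strictMono {s : ℕ} {ι : Fin (s + 1) → α} (hι : StrictMono ι) :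
    F.extendSorted a ι = a ⟨s, ι, hι⟩ := by
  rw [extendSorted_eq_of_comp_eq F a hι Function.surjective_id (Function.comp_id ι), map_id]
  rfl

theorem extendSorted_comp {s t : ℕ} (x : Fin (s + 1) → α) {h : Fin (t + 1) → Fin (s + 1)}
    (hh : Function.Surjective h) :
    F.extendSorted a (x ∘ h) = F.map h hh (F.extendSorted a x) := by
  rw [extendSorted_eq_of_comp_eq F a (sortedImage_strictMono x) ((rank_surjective x).comp hh)
    (by rw [← Function.comp_assoc, sortedImage_comp_rank]), map_comp]
  rfl

end OmegaFunctor

theorem OmegaFunctor.Nat.naturality_apply {R : Type} [CommRing R] {F G : OmegaFunctor R}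
    (T : F.Nat G) {s t : ℕ} {h : Fin (t + 1) → Fin (s + 1)} (hh : Function.Surjective h)
    (v : F.obj s) : G.map h hh (T.1 s v) = T.1 t (F.map h hh v) :=
  LinearMap.congr_fun (T.2 h hh) v

namespace Mfun

open Tuple

variable {R : Type} [CommRing R] {S : Type} {pt : S}

noncomputable def e {t : ℕ} (x : Fin (t + 1) → {x : S // x ≠ pt}) : (Mfun R S pt).obj t :=
  Finsupp.single x 1

theorem map_e {s t : ℕ} {h : Fin (t + 1) → Fin (s + 1)} (hh : Function.Surjective h)
    (x : Fin (s + 1) → {x : S // x ≠ pt}) : (Mfun R S pt).map h hh (e x) = e (x ∘ h) :=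
  Finsupp.mapDomain_single

theorem hom_ext {M : Type*} [AddCommGroup M] [Module R M] {t : ℕ}
    {φ ψ : (Mfun R S pt).obj t →ₗ[R] M} (h : ∀ x, φ (e x) = ψ (e x)) : φ = ψ :=
  Finsupp.lhom_ext' fun x => LinearMap.ext_ring (h x)

variable (R) in
noncomputable def lift {M : Type*} [AddCommGroup M] [Module R M] {t : ℕ}
    (φ : (Fin (t + 1) → {x : S // x ≠ pt}) → M) : (Mfun R S pt).obj t →ₗ[R] M :=
  Finsupp.linearCombination R φ

theorem lift_e {M : Type*} [AddCommGroup M] [Module R M] {t : ℕ}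
    (φ : (Fin (t + 1) → {x : S // x ≠ pt}) → M) (x : Fin (t + 1) → {x : S // x ≠ pt}) :
    lift R φ (e x) = φ x :=
  (Finsupp.linearCombination_single R 1 x).trans (one_smul R _)

variable [LinearOrder {x : S // x ≠ pt}]

theorem nat_apply_e {F : OmegaFunctor R} (T : (Mfun R S pt).Nat F) {t : ℕ}
    (x : Fin (t + 1) → {x : S // x ≠ pt}) :
    T.1 t (e x) = F.map (rank x) (rank_surjective x) (T.1 _ (e (sortedImage x))) := by
  rw [OmegaFunctor.Nat.naturality_apply T, map_e, sortedImage_comp_rank]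

theorem nat_ext {F : OmegaFunctor R} {T T' : (Mfun R S pt).Nat F}
    (h : ∀ i : Sorted {x : S // x ≠ pt}, T.1 i.1 (e i.2.1) = T'.1 i.1 (e i.2.1)) : T = T' := by
  refine Subtype.ext (funext fun t => hom_ext fun x => ?_)
  rw [nat_apply_e T, nat_apply_e T', h ⟨_, sortedImage x, sortedImage_strictMono x⟩]

noncomputable def natOfSorted (F : OmegaFunctor R)
    (a : ∀ i : Sorted {x : S // x ≠ pt}, F.obj i.1) : (Mfun R S pt).Nat F :=
  ⟨fun _ => lift R (F.extendSorted a), fun {_ _} _ hh => hom_ext fun x => by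
    rw [LinearMap.comp_apply, LinearMap.comp_apply, map_e]
    beta_reduce
    rw [lift_e, lift_e, F.extendSorted_comp a x hh]⟩

theorem natOfSorted_e (F : OmegaFunctor R) (a : ∀ i : Sorted {x : S // x ≠ pt}, F.obj i.1)
    (i : Sorted {x : S // x ≠ pt}) : (natOfSorted F a).1 i.1 (e i.2.1) = a i := by
  obtain ⟨s, ι, hι⟩ := i
  exact (lift_e _ ι).trans (F.extendSorted_of_strictMono a hι)

end Mfun

/-- basis property of `M(S)`, from the proof of Lemma 0.1.
The elements `e_i = [x₁ ∧ ⋯ ∧ x_s]`, for `i = (x₁ < ⋯ < x_s) ∈ I`, form a basis of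
the functor `M(S)`: for every functor `F : Ωᵒᵖ → Mod R` and every family
`a_i ∈ F(⟨|i|⟩)` there is a unique natural transformation `T : M(S) → F` with
`T(e_i) = a_i` for all `i ∈ I`. -/
theorem M_basis (R : Type) [CommRing R] (S : Type) (pt : S)
    [LinearOrder {x : S // x ≠ pt}]
    (F : OmegaFunctor R) (a : ∀ i : Idx S pt, F.obj i.1) :
    ∃! T : ((Mfun R S pt).Nat F),
      ∀ i : Idx S pt, T.1 i.1 (Finsupp.single i.2.1 1) = a i :=
  ⟨Mfun.natOfSorted F a, Mfun.natOfSorted_e F a,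
    fun T hT => Mfun.nat_ext fun i => (hT i).trans (Mfun.natOfSorted_e F a i).symm⟩
end

section
/- Let X and Y be pointed sets with X finite, and let R be a commutative ring. Let Ω be the category of sets ⟨s⟩ = {1,…,s}, s > 0, with surjections, and let M(X), M(Y) : Ωᵒᵖ → Mod R be the functors sending ⟨s⟩ to the free reduced R-module on X^∧s and Y^∧s respectively, with surjections acting by coordinate precomposition. Define ε : (free reduced R-module on the pointed set of basepoint-preserving functions X → Y) → Hom(M(X), M(Y)) by ε([v])_s([x₁∧⋯∧x_s]) = [v(x₁)∧⋯∧v(x_s)]. Then ε is an isomorphism of R-modules. -/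
open scoped Classical

/-- Non-basepoint basepoint-preserving functions `(X,px) → (Y,py)`: the basis of
the free reduced `R`-module on the pointed set of pointed functions `X → Y`
(whose basepoint is the constant-basepoint function). -/
def PFunB (X Y : Type) (px : X) (py : Y) : Type :=
  {v : X → Y // v px = py ∧ ∃ x, v x ≠ py}


/-!
Write `X°`, `Y°` for the non-basepoint elements and, for each nonempty `A ⊆ X°`, let `e_A` be a
fixed enumeration of `A` without repetitions. Every tuple `x` in `X°` factors as `e_A ∘ g` with `A`
its image and `g` a surjection, so by naturality a natural transformation `T` is determined by the
values `T(e_A)`. Reading a tuple `y` occurring in `T(e_A)` as the pointed function `e_A(i) ↦ y_i`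
with support `A` turns these values into one element `enumValues T` of `R[Y^X]`, injectively in `T`.
Now `enumValues (ε [v]) = ∑_{∅ ≠ A ⊆ supp v} [v|_A]` is `[v]` plus terms of smaller support, so
`enumValues ∘ ε` is unitriangular, hence bijective. Thus `ε` is injective and `enumValues` is
surjective, hence bijective, and therefore `ε` is bijective too.
-/

open Finsupp Function

theorem Finsupp.isNilpotent_of_map_single_mem_supported {R ι M : Type*} [Semiring R]
    [AddCommMonoid M] [Module R M] (g : Module.End R (ι →₀ M)) (rank : ι → ℕ) (N : ℕ)
    (hN : ∀ i, rank i < N) (hg : ∀ i m, g (single i m) ∈ supported M R {j | rank j < rank i}) :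
    IsNilpotent g := by
  have hvanish : ∀ k, ∀ x ∈ supported M R {j | rank j < k}, (g ^ k) x = 0 := by
    intro k
    induction k with
    | zero => simp
    | succ k ih =>
      intro x hx
      rw [pow_succ, Module.End.mul_apply]
      refine ih _ ?_
      rw [← x.sum_single, map_finsuppSum]
      refine Submodule.finsuppSum_mem _ _ _ _ fun i hi => ?_
      refine supported_mono (fun j (hj : rank j < rank i) => ?_) (hg i (x i))
      have : rank i < k + 1 := (mem_supported R x).mp hx (mem_support_iff.mpr hi)
      exact (show rank j < k by omega)
  exact ⟨N, LinearMap.ext fun x => hvanish N x ((mem_supported R x).mpr fun i _ => hN i)⟩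

theorem Finsupp.bijective_of_map_single_sub_mem_supported {R ι M : Type*} [Ring R]
    [AddCommGroup M] [Module R M] (f : Module.End R (ι →₀ M)) (rank : ι → ℕ) (N : ℕ)
    (hN : ∀ i, rank i < N)
    (hf : ∀ i m, f (single i m) - single i m ∈ supported M R {j | rank j < rank i}) :
    Bijective f := by
  have hnil : IsNilpotent (f - 1) := isNilpotent_of_map_single_mem_supported _ rank N hN
    fun i m => by simpa only [LinearMap.sub_apply, Module.End.one_apply] using hf i m
  have hunit := hnil.isUnit_one_add
  rw [add_sub_cancel] at hunit
  exact (Module.End.isUnit_iff f).mp hunit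

namespace Finset

variable {α : Type*} {A : Finset α}

/-- Indexed by `Fin (A.card - 1 + 1)` rather than `Fin A.card`, to be a tuple in `⟨s + 1⟩`. -/
noncomputable def Nonempty.enum (hA : A.Nonempty) : Fin (A.card - 1 + 1) ≃ A :=
  (A.equivFinOfCardEq (Nat.sub_add_cancel hA.card_pos).symm).symm

noncomputable def Nonempty.tuple (hA : A.Nonempty) (i : Fin (A.card - 1 + 1)) : α :=
  hA.enum i

theorem Nonempty.tuple_mem (hA : A.Nonempty) (i : Fin (A.card - 1 + 1)) : hA.tuple i ∈ A :=
  (hA.enum i).2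

theorem Nonempty.tuple_injective (hA : A.Nonempty) : Injective hA.tuple :=
  Subtype.val_injective.comp hA.enum.injective

theorem Nonempty.exists_tuple_eq (hA : A.Nonempty) {a : α} (ha : a ∈ A) :
    ∃ i, hA.tuple i = a :=
  ⟨hA.enum.symm ⟨a, ha⟩, by simp [Nonempty.tuple]⟩

end Finset

noncomputable def OmegaFunctor.Nat.applyₗ {R : Type} [CommRing R] {F G : OmegaFunctor R}
    (s : ℕ) (ξ : F.obj s) :
    F.Nat G →ₗ[R] G.obj s :=
  (LinearMap.applyₗ ξ).comp ((LinearMap.proj s).comp (F.Nat G).subtype)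

namespace Mfun

variable {R : Type} [CommRing R] {X Y : Type} {px : X}

theorem nat_apply_single_comp {G : OmegaFunctor R} (T : (Mfun R X px).Nat G) {s t : ℕ}
    (x : Fin (t + 1) → {a : X // a ≠ px}) (g : Fin (s + 1) → Fin (t + 1)) (hg : Surjective g) :
    T.1 s (single (x ∘ g) 1) = G.map g hg (T.1 t (single x 1)) := by
  have hmap : (Mfun R X px).map g hg (single x 1) = single (x ∘ g) 1 := mapDomain_single
  rw [← hmap]
  exact (LinearMap.congr_fun (T.2 g hg) _).symm

theorem nat_eq_zero_of_apply_tuple {G : OmegaFunctor R} (T : (Mfun R X px).Nat G)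
    (hT : ∀ (A : Finset {a : X // a ≠ px}) (hA : A.Nonempty),
      T.1 (A.card - 1) (single hA.tuple 1) = 0) :
    T = 0 := by
  have hsingle : ∀ (s : ℕ) (x : Fin (s + 1) → {a : X // a ≠ px}), T.1 s (single x 1) = 0 := by
    intro s x
    have hA : (Finset.univ.image x).Nonempty := Finset.univ_nonempty.image x
    choose g hg using fun t => hA.exists_tuple_eq (Finset.mem_image_of_mem x (Finset.mem_univ t))
    have hsurj : Surjective g := fun i => by
      obtain ⟨t, -, ht⟩ := Finset.mem_image.mp (hA.tuple_mem i)
      exact ⟨t, hA.tuple_injective ((hg t).trans ht)⟩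
    rw [show x = hA.tuple ∘ g from funext fun t => (hg t).symm,
      nat_apply_single_comp T _ g hsurj, hT _ hA, map_zero]
  exact Subtype.ext (funext fun s => lhom_ext' fun x => LinearMap.ext_ring (hsingle s x))

end Mfun

section SmashMap

variable {R : Type} [CommRing R] {X Y : Type} {px : X}

noncomputable def smashMap (py : Y) (v : X → Y) (s : ℕ) :
    ((Fin (s + 1) → {a : X // a ≠ px}) →₀ R) →ₗ[R] ((Fin (s + 1) → {b : Y // b ≠ py}) →₀ R) :=
  linearCombination R fun x =>
    if h : ∀ t, v (x t).1 ≠ py then single (fun t => ⟨v (x t).1, h t⟩) 1 else 0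

theorem smashMap_single (py : Y) (v : X → Y) {s : ℕ} (x : Fin (s + 1) → {a : X // a ≠ px}) :
    smashMap (R := R) py v s (single x 1) =
      if h : ∀ t, v (x t).1 ≠ py then single (fun t => ⟨v (x t).1, h t⟩) 1 else 0 := by
  simp [smashMap]

theorem smashMap_natural (py : Y) (v : X → Y) {s t : ℕ} (g : Fin (t + 1) → Fin (s + 1))
    (hg : Surjective g) :
    (lmapDomain R R (· ∘ g)).comp (smashMap (px := px) py v s) =
      (smashMap py v t).comp (lmapDomain R R (· ∘ g)) := by
  refine lhom_ext' fun x => LinearMap.ext_ring ?_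
  simp only [LinearMap.comp_apply, lsingle_apply, lmapDomain_apply, mapDomain_single,
    smashMap_single]
  by_cases hx : ∀ u, v (x u).1 ≠ py
  · have hxg : ∀ u, v ((x ∘ g) u).1 ≠ py := fun u => hx (g u)
    rw [dif_pos hx, dif_pos hxg, mapDomain_single]
    rfl
  · have hxg : ¬∀ u, v ((x ∘ g) u).1 ≠ py := fun hxg => hx fun u => by
      obtain ⟨w, rfl⟩ := hg u
      exact hxg w
    rw [dif_neg hx, dif_neg hxg, mapDomain_zero]

noncomputable def smashNat (py : Y) (v : X → Y) : (Mfun R X px).Nat (Mfun R Y py) :=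
  ⟨fun s => smashMap py v s, fun g hg => smashMap_natural py v g hg⟩

end SmashMap

namespace PFunB

variable {X Y : Type} {px : X} {py : Y}

theorem exists_ne_base (v : PFunB X Y px py) : ∃ a : {a : X // a ≠ px}, v.1 a ≠ py := by
  obtain ⟨x, hx⟩ := v.2.2
  exact ⟨⟨x, fun h => hx (h ▸ v.2.1)⟩, hx⟩

theorem ext_of_ne_base {v w : PFunB X Y px py} (h : ∀ a : {a : X // a ≠ px}, v.1 a = w.1 a) :
    v = w := by
  refine Subtype.ext (funext fun x => ?_)
  by_cases hx : x = px
  · rw [hx, v.2.1, w.2.1]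
  · exact h ⟨x, hx⟩

variable {A : Finset {a : X // a ≠ px}}

noncomputable def extend (hA : A.Nonempty) (y : Fin (A.card - 1 + 1) → {b : Y // b ≠ py}) :
    PFunB X Y px py :=
  ⟨Function.extend (Subtype.val ∘ hA.tuple) (fun i => (y i).1) (fun _ => py),
    extend_apply' _ _ _ fun ⟨i, hi⟩ => (hA.tuple i).2 hi,
    ⟨(hA.tuple 0).1, by
      convert (y 0).2
      exact (Subtype.val_injective.comp hA.tuple_injective).extend_apply _ _ 0⟩⟩

theorem extend_apply_tuple (hA : A.Nonempty) (y : Fin (A.card - 1 + 1) → {b : Y // b ≠ py})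
    (i : Fin (A.card - 1 + 1)) : (extend hA y).1 (hA.tuple i) = y i :=
  (Subtype.val_injective.comp hA.tuple_injective).extend_apply (fun i => (y i).1) (fun _ => py) i

theorem extend_apply_of_notMem (hA : A.Nonempty) (y : Fin (A.card - 1 + 1) → {b : Y // b ≠ py})
    {a : {a : X // a ≠ px}} (ha : a ∉ A) : (extend hA y).1 a = py :=
  extend_apply' (fun i => (y i).1) (fun _ => py) a.1 fun ⟨i, hi⟩ =>
    ha ((Subtype.ext hi : hA.tuple i = a) ▸ hA.tuple_mem i)

theorem extend_injective (hA : A.Nonempty) : Injective (extend (py := py) hA) := fun y y' h =>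
  funext fun i => Subtype.ext <| by
    rw [← extend_apply_tuple hA y, ← extend_apply_tuple hA y', h]

variable [Fintype X]

noncomputable def support (v : PFunB X Y px py) : Finset {a : X // a ≠ px} :=
  Finset.univ.filter fun a => v.1 a ≠ py

theorem mem_support {v : PFunB X Y px py} {a : {a : X // a ≠ px}} :
    a ∈ v.support ↔ v.1 a ≠ py := by
  simp [support]

theorem support_nonempty (v : PFunB X Y px py) : v.support.Nonempty :=
  let ⟨a, ha⟩ := v.exists_ne_base
  ⟨a, mem_support.mpr ha⟩

theorem support_extend (hA : A.Nonempty) (y : Fin (A.card - 1 + 1) → {b : Y // b ≠ py}) :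
    (extend hA y).support = A := by
  ext a
  rw [mem_support]
  refine ⟨fun ha => by_contra fun ha' => ha (extend_apply_of_notMem hA y ha'), fun ha => ?_⟩
  obtain ⟨i, rfl⟩ := hA.exists_tuple_eq ha
  rw [extend_apply_tuple]
  exact (y i).2

theorem extend_support_values (v : PFunB X Y px py) :
    extend v.support_nonempty (fun i => ⟨v.1 (v.support_nonempty.tuple i),
      mem_support.mp (v.support_nonempty.tuple_mem i)⟩) = v := by
  refine ext_of_ne_base fun a => ?_
  by_cases ha : a ∈ v.support
  · obtain ⟨i, rfl⟩ := v.support_nonempty.exists_tuple_eq ha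
    rw [extend_apply_tuple]
  · rw [extend_apply_of_notMem _ _ ha, not_not.mp (mem_support.not.mp ha)]

end PFunB

noncomputable def epsilon (R : Type) [CommRing R] (X Y : Type) (px : X) (py : Y) :
    (PFunB X Y px py →₀ R) →ₗ[R] (Mfun R X px).Nat (Mfun R Y py) :=
  linearCombination R fun v => smashNat py v.1

section EnumValues

variable {R : Type} [CommRing R] {X Y : Type} {px : X} {py : Y} [Fintype X]

noncomputable def enumValues :
    (Mfun R X px).Nat (Mfun R Y py) →ₗ[R] (PFunB X Y px py →₀ R) :=
  ∑ A : {A : Finset {a : X // a ≠ px} // A.Nonempty},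
    (lmapDomain R R (PFunB.extend A.2)).comp (OmegaFunctor.Nat.applyₗ _ (single A.2.tuple 1))

theorem enumValues_apply_extend (T : (Mfun R X px).Nat (Mfun R Y py))
    {A : Finset {a : X // a ≠ px}} (hA : A.Nonempty)
    (y : Fin (A.card - 1 + 1) → {b : Y // b ≠ py}) :
    enumValues T (PFunB.extend hA y) =
      lapply (R := R) y (T.1 (A.card - 1) (single hA.tuple 1)) := by
  rw [enumValues, LinearMap.sum_apply, Finset.sum_apply', Finset.sum_eq_single ⟨A, hA⟩]
  · exact mapDomain_apply (PFunB.extend_injective hA) _ y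
  · rintro ⟨B, hB⟩ - hBA
    refine mapDomain_of_notMem_range _ _ fun ⟨y', hy'⟩ => hBA (Subtype.ext ?_)
    change B = A
    rw [← PFunB.support_extend hB y', ← PFunB.support_extend hA y, hy']
  · exact fun h => absurd (Finset.mem_univ _) h

theorem enumValues_injective :
    Injective (enumValues : (Mfun R X px).Nat (Mfun R Y py) →ₗ[R] (PFunB X Y px py →₀ R)) := by
  refine (injective_iff_map_eq_zero _).mpr fun T hT => Mfun.nat_eq_zero_of_apply_tuple T
    fun A hA => ext fun y => ?_
  have h := enumValues_apply_extend T hA y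
  rw [hT] at h
  exact h.symm

theorem enumValues_smashNat (v : PFunB X Y px py) :
    enumValues (R := R) (smashNat py v.1) =
      ∑ B : {B : Finset {a : X // a ≠ px} // B.Nonempty},
        if h : ∀ t, v.1 (B.2.tuple t) ≠ py then
          single (PFunB.extend B.2 fun t => ⟨v.1 (B.2.tuple t), h t⟩) 1 else 0 := by
  rw [enumValues, LinearMap.sum_apply]
  refine Finset.sum_congr rfl fun B _ => ?_
  change mapDomain _ (smashMap py v.1 _ (single B.2.tuple 1)) = _
  rw [smashMap_single]
  split_ifs <;> simp

theorem enumValues_smashNat_sub_mem_supported (v : PFunB X Y px py) :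
    enumValues (R := R) (smashNat py v.1) - single v 1 ∈
      supported R R {w : PFunB X Y px py | w.support.card < v.support.card} := by
  set B₀ : {B : Finset {a : X // a ≠ px} // B.Nonempty} := ⟨v.support, v.support_nonempty⟩
  rw [enumValues_smashNat, ← Finset.add_sum_erase _ _ (Finset.mem_univ B₀),
    dif_pos fun t => PFunB.mem_support.mp (v.support_nonempty.tuple_mem t),
    PFunB.extend_support_values, add_sub_cancel_left]
  refine Submodule.sum_mem _ fun B hB => ?_
  split_ifs with h
  · refine single_mem_supported R _ (Finset.card_lt_card ?_)
    rw [PFunB.support_extend]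
    refine (Finset.ssubset_iff_subset_ne).mpr ⟨fun a ha => ?_, fun hBv => ?_⟩
    · obtain ⟨t, rfl⟩ := B.2.exists_tuple_eq ha
      exact PFunB.mem_support.mpr (h t)
    · exact Finset.ne_of_mem_erase hB (Subtype.ext hBv)
  · exact zero_mem _

theorem enumValues_comp_epsilon_bijective :
    Bijective (enumValues ∘ₗ epsilon R X Y px py) := by
  refine bijective_of_map_single_sub_mem_supported _ (fun w => w.support.card)
    (Fintype.card {a : X // a ≠ px} + 1) (fun w => Nat.lt_succ_of_le (Finset.card_le_univ _))
    fun v r => ?_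
  have hv : (enumValues ∘ₗ epsilon R X Y px py) (single v r) - single v r =
      r • (enumValues (smashNat py v.1) - single v 1) := by
    simp [epsilon, smul_sub]
  rw [hv]
  exact Submodule.smul_mem _ r (enumValues_smashNat_sub_mem_supported v)

theorem epsilon_bijective : Bijective (epsilon R X Y px py) := by
  have hunip : Bijective (enumValues ∘ₗ epsilon R X Y px py) := enumValues_comp_epsilon_bijective
  refine ⟨Injective.of_comp (f := enumValues) hunip.1, fun T => ?_⟩
  obtain ⟨m, hm⟩ := hunip.2 (enumValues T)
  exact ⟨m, enumValues_injective hm⟩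

end EnumValues

/-- Theorem 0.6 of the paper, key case of fixed bidegree:
for `X` finite, the map
`ε : R[(Y^X)] → Hom(M(X), M(Y))`, `ε([v])_s([x₁∧⋯∧x_s]) = [v(x₁)∧⋯∧v(x_s)]`,
is an isomorphism of `R`-modules (from the free reduced module on pointed
functions `X → Y` to the module of natural transformations `M(X) → M(Y)`). -/
theorem epsilon_isomorphism (R : Type) [CommRing R]
    (X Y : Type) [Finite X] (px : X) (py : Y) :
    ∃ e : ((PFunB X Y px py) →₀ R) ≃ₗ[R] ((Mfun R X px).Nat (Mfun R Y py)),
      ∀ (v : PFunB X Y px py) (s : ℕ) (x : Fin (s + 1) → {a : X // a ≠ px}),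
        (e (Finsupp.single v 1)).1 s (Finsupp.single x 1) =
          if h : ∀ t, v.1 (x t).1 ≠ py then
            Finsupp.single (fun t => (⟨v.1 (x t).1, h t⟩ : {y : Y // y ≠ py})) 1
          else 0 := by
  have := Fintype.ofFinite X
  refine ⟨LinearEquiv.ofBijective _ epsilon_bijective, fun v s x => ?_⟩
  rw [LinearEquiv.ofBijective_apply, epsilon, linearCombination_single, one_smul]
  exact smashMap_single py v.1 x
end
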